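/- arXiv:2605.04421 — 2 statements merged into one kernel-verified Lean document; each statement's English description precedes it below -/
import Mathlib

section
/- Let $f_\tau, f_\phi : [0,\infty) \to \mathbb{R}$ be continuous functions with $0 < \tau_{\min} \le f_\tau(t)$ for all $t$, and suppose $A_{\min} \le f_\phi(t)/f_\tau(t) \le A_{\max}$ for all $t \ge 0$. If $a : [0,\infty) \to \mathbb{R}$ is differentiable, satisfies $a'(t) = -f_\tau(t) a(t) + f_\phi(t)$ for all $t \ge 0$, and $A_{\min} \le a(0) \le A_{\max}$, then $A_{\min} \le a(t) \le A_{\max}$ for all $t \ge 0$. -/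
/-!
Above the level `C ≥ fφ / fτ` the right-hand side `-fτ a + fφ = -fτ (a - C) + (fφ - C fτ)` is
negative, so a solution cannot cross any level `C + ε` upwards; letting `ε → 0` traps it below `C`.
The lower bound is the same statement for `-a`.
-/

open Set

theorem image_le_of_deriv_right_neg_above {f f' : ℝ → ℝ} {a b C : ℝ}
    (hf : ContinuousOn f (Icc a b))
    (hf' : ∀ x ∈ Ico a b, HasDerivWithinAt f (f' x) (Ici x) x) (ha : f a ≤ C)
    (bound : ∀ x ∈ Ico a b, C < f x → f' x < 0) : ∀ ⦃x⦄, x ∈ Icc a b → f x ≤ C := by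
  intro x hx
  refine le_of_forall_pos_le_add fun ε hε => ?_
  exact image_le_of_deriv_right_lt_deriv_boundary hf hf' (B := fun _ => C + ε) (by linarith)
    (fun _ => hasDerivAt_const _ _) (fun y hy hfy => bound y hy (by linarith)) hx

section LinearODE

variable {k g x : ℝ → ℝ} {t₀ C : ℝ}

theorem linearODE_le_of_div_le (hk : ∀ t ≥ t₀, 0 < k t) (hg : ∀ t ≥ t₀, g t / k t ≤ C)
    (hx : ∀ t ≥ t₀, HasDerivAt x (-(k t) * x t + g t) t) (h₀ : x t₀ ≤ C) :
    ∀ t ≥ t₀, x t ≤ C := by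
  intro t ht
  have hcont : ContinuousOn x (Icc t₀ t) := fun s hs =>
    (hx s hs.1).continuousAt.continuousWithinAt
  refine image_le_of_deriv_right_neg_above hcont (fun s hs => (hx s hs.1).hasDerivWithinAt) h₀
    (fun s hs hCx => ?_) ⟨ht, le_rfl⟩
  have hks := hk s hs.1
  have hgs : g s ≤ C * k s := (div_le_iff₀ hks).1 (hg s hs.1)
  have hxs : C * k s < x s * k s := mul_lt_mul_of_pos_right hCx hks
  linarith

theorem linearODE_ge_of_le_div (hk : ∀ t ≥ t₀, 0 < k t) (hg : ∀ t ≥ t₀, C ≤ g t / k t)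
    (hx : ∀ t ≥ t₀, HasDerivAt x (-(k t) * x t + g t) t) (h₀ : C ≤ x t₀) :
    ∀ t ≥ t₀, C ≤ x t := by
  have hneg := linearODE_le_of_div_le (x := fun t => -x t) (g := fun t => -g t) (C := -C) hk
    (fun t ht => by simpa only [neg_div, neg_le_neg_iff] using hg t ht)
    (fun t ht => (hx t ht).neg.congr_deriv (by ring)) (neg_le_neg h₀)
  exact fun t ht => neg_le_neg_iff.1 (hneg t ht)

end LinearODE

theorem lan_forward_invariance_general
    (fτ fφ a : ℝ → ℝ) (τmin Amin Amax : ℝ)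
    (hτmin : 0 < τmin)
    (hτ : ∀ t ≥ (0:ℝ), τmin ≤ fτ t)
    (hratio : ∀ t ≥ (0:ℝ), Amin ≤ fφ t / fτ t ∧ fφ t / fτ t ≤ Amax)
    (hderiv : ∀ t ≥ (0:ℝ), HasDerivAt a (-(fτ t) * a t + fφ t) t)
    (h0 : Amin ≤ a 0 ∧ a 0 ≤ Amax) :
    ∀ t ≥ (0:ℝ), Amin ≤ a t ∧ a t ≤ Amax := by
  have hpos : ∀ t ≥ (0:ℝ), 0 < fτ t := fun t ht => hτmin.trans_le (hτ t ht)
  intro t ht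
  exact ⟨linearODE_ge_of_le_div hpos (fun s hs => (hratio s hs).1) hderiv h0.1 t ht,
    linearODE_le_of_div_le hpos (fun s hs => (hratio s hs).2) hderiv h0.2 t ht⟩

theorem lan_forward_invariance
    (fτ fφ a : ℝ → ℝ) (τmin Amin Amax : ℝ)
    (hfτc : ContinuousOn fτ (Set.Ici 0))
    (hfφc : ContinuousOn fφ (Set.Ici 0))
    (hτmin : 0 < τmin)
    (hτ : ∀ t ≥ (0:ℝ), τmin ≤ fτ t)
    (hratio : ∀ t ≥ (0:ℝ), Amin ≤ fφ t / fτ t ∧ fφ t / fτ t ≤ Amax)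
    (hderiv : ∀ t ≥ (0:ℝ), HasDerivAt a (-(fτ t) * a t + fφ t) t)
    (h0 : Amin ≤ a 0 ∧ a 0 ≤ Amax) :
    ∀ t ≥ (0:ℝ), Amin ≤ a t ∧ a t ≤ Amax :=
  lan_forward_invariance_general fτ fφ a τmin Amin Amax hτmin hτ hratio hderiv h0
end

section
/- Let $f_\tau, f_\phi : [0,\infty) \to \mathbb{R}$ be continuous, with $f_\tau(t) \ge \tau_{\min} > 0$, and suppose $f_\phi(t)/f_\tau(t) \to A^*$ as $t \to \infty$ for some $A^* \in \mathbb{R}$, and that $f_\phi/f_\tau$ is bounded. If $a$ solves $a'(t) = -f_\tau(t) a(t) + f_\phi(t)$, then $a(t) \to A^*$ as $t \to \infty$. -/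
/-!
Above a level `b` strictly exceeding `fφ / fτ`, the excess `a - b` satisfies
`(a - b)' < -fτ (a - b) ≤ -τmin (a - b)`, so by the fencing theorem it stays below a decaying
exponential `K exp (-τmin (t - t₀))`. Hence `limsup a ≤ b` for every `b > A'`; applying this to
`-a` gives `liminf a ≥ A'`.
-/

open Filter Topology Real

theorem le_mul_exp_of_hasDerivAt_lt_neg_mul {f f' : ℝ → ℝ} {k K t₀ : ℝ}
    (hf : ∀ t ≥ t₀, HasDerivAt f (f' t) t) (hdecay : ∀ t ≥ t₀, 0 < f t → f' t < -k * f t)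
    (hK : 0 < K) (hfK : f t₀ ≤ K) :
    ∀ t ≥ t₀, f t ≤ K * exp (-k * (t - t₀)) := by
  have hB : ∀ t,
      HasDerivAt (fun s => K * exp (-k * (s - t₀))) (-k * (K * exp (-k * (t - t₀)))) t :=
    fun t => ((((hasDerivAt_id' t).sub_const t₀).const_mul (-k)).exp.const_mul K).congr_deriv
      (by ring)
  intro t ht
  refine image_le_of_deriv_right_lt_deriv_boundary
    (fun s hs => (hf s hs.1).continuousAt.continuousWithinAt)
    (fun s hs => (hf s hs.1).hasDerivWithinAt) (by simpa using hfK) hB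
    (fun s hs hfB => hfB ▸ hdecay s hs.1 (hfB ▸ by positivity)) ⟨ht, le_rfl⟩

theorem eventually_lt_of_hasDerivAt_lt_neg_mul {f f' : ℝ → ℝ} {k δ : ℝ} (hk : 0 < k)
    (hf : ∀ᶠ t in atTop, HasDerivAt f (f' t) t)
    (hdecay : ∀ᶠ t in atTop, 0 < f t → f' t < -k * f t) (hδ : 0 < δ) :
    ∀ᶠ t in atTop, f t < δ := by
  obtain ⟨t₀, ht₀⟩ := eventually_atTop.1 (hf.and hdecay)
  have hbound := le_mul_exp_of_hasDerivAt_lt_neg_mul (fun t ht => (ht₀ t ht).1)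
    (fun t ht => (ht₀ t ht).2) (lt_max_of_lt_right one_pos) (le_max_left (f t₀) 1)
  have htail : Tendsto (fun t => max (f t₀) 1 * exp (-k * (t - t₀))) atTop (𝓝 0) := by
    have : Tendsto (fun t => -k * (t - t₀)) atTop atBot :=
      (tendsto_atTop_add_const_right _ _ tendsto_id).const_mul_atTop_of_neg (neg_neg_of_pos hk)
    simpa using (tendsto_exp_atBot.comp this).const_mul _
  filter_upwards [eventually_ge_atTop t₀, htail.eventually_lt_const hδ] with t ht hlt
  exact (hbound t ht).trans_lt hlt

section LinearODE

variable {τ φ a : ℝ → ℝ} {τmin : ℝ}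

theorem eventually_lt_of_hasDerivAt_linear_ode {b c : ℝ} (hτmin : 0 < τmin)
    (hτ : ∀ᶠ t in atTop, τmin ≤ τ t) (ha : ∀ᶠ t in atTop, HasDerivAt a (-(τ t) * a t + φ t) t)
    (hφ : ∀ᶠ t in atTop, φ t < τ t * b) (hbc : b < c) :
    ∀ᶠ t in atTop, a t < c := by
  have hdecay : ∀ᶠ t in atTop, 0 < a t - b → -(τ t) * a t + φ t < -τmin * (a t - b) := by
    filter_upwards [hτ, hφ] with t hτt hφt hpos
    nlinarith
  filter_upwards [eventually_lt_of_hasDerivAt_lt_neg_mul hτmin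
    (ha.mono fun t h => h.sub_const b) hdecay (sub_pos.2 hbc)] with t ht
  linarith

theorem eventually_lt_of_hasDerivAt_linear_ode_of_tendsto_div {A c : ℝ} (hτmin : 0 < τmin)
    (hτ : ∀ᶠ t in atTop, τmin ≤ τ t) (ha : ∀ᶠ t in atTop, HasDerivAt a (-(τ t) * a t + φ t) t)
    (hlim : Tendsto (fun t => φ t / τ t) atTop (𝓝 A)) (hAc : A < c) :
    ∀ᶠ t in atTop, a t < c := by
  obtain ⟨b, hAb, hbc⟩ := exists_between hAc
  refine eventually_lt_of_hasDerivAt_linear_ode hτmin hτ ha ?_ hbc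
  filter_upwards [hτ, hlim.eventually (gt_mem_nhds hAb)] with t hτt hφt
  rwa [div_lt_iff₀ (hτmin.trans_le hτt), mul_comm] at hφt

theorem tendsto_of_hasDerivAt_linear_ode {A : ℝ} (hτmin : 0 < τmin)
    (hτ : ∀ᶠ t in atTop, τmin ≤ τ t) (ha : ∀ᶠ t in atTop, HasDerivAt a (-(τ t) * a t + φ t) t)
    (hlim : Tendsto (fun t => φ t / τ t) atTop (𝓝 A)) :
    Tendsto a atTop (𝓝 A) := by
  have hneg : ∀ᶠ t in atTop, HasDerivAt (-a) (-(τ t) * (-a) t + (-φ) t) t :=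
    ha.mono fun t h => h.neg.congr_deriv (by simp only [Pi.neg_apply]; ring)
  have hlim_neg : Tendsto (fun t => (-φ) t / τ t) atTop (𝓝 (-A)) := by
    simpa only [Pi.neg_apply, neg_div] using hlim.neg
  refine tendsto_order.2 ⟨fun l hl => ?_, fun u hu =>
    eventually_lt_of_hasDerivAt_linear_ode_of_tendsto_div hτmin hτ ha hlim hu⟩
  filter_upwards [eventually_lt_of_hasDerivAt_linear_ode_of_tendsto_div hτmin hτ hneg hlim_neg
    (neg_lt_neg hl)] with t ht
  simpa using ht

end LinearODE

theorem lan_asymptotic_tracking_general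
    (fτ fφ a : ℝ → ℝ) (τmin A' : ℝ)
    (hτmin : 0 < τmin)
    (hτ : ∀ t ≥ (0:ℝ), τmin ≤ fτ t)
    (hlim : Filter.Tendsto (fun t => fφ t / fτ t) Filter.atTop (nhds A'))
    (hderiv : ∀ t ≥ (0:ℝ), HasDerivAt a (-(fτ t) * a t + fφ t) t) :
    Filter.Tendsto a Filter.atTop (nhds A') :=
  tendsto_of_hasDerivAt_linear_ode hτmin (eventually_ge_atTop 0 |>.mono hτ)
    (eventually_ge_atTop 0 |>.mono hderiv) hlim

theorem lan_asymptotic_tracking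
    (fτ fφ a : ℝ → ℝ) (τmin A' : ℝ)
    (hfτc : ContinuousOn fτ (Set.Ici 0))
    (hfφc : ContinuousOn fφ (Set.Ici 0))
    (hτmin : 0 < τmin)
    (hτ : ∀ t ≥ (0:ℝ), τmin ≤ fτ t)
    (hbdd : ∃ C, ∀ t ≥ (0:ℝ), |fφ t / fτ t| ≤ C)
    (hlim : Filter.Tendsto (fun t => fφ t / fτ t) Filter.atTop (nhds A'))
    (hderiv : ∀ t ≥ (0:ℝ), HasDerivAt a (-(fτ t) * a t + fφ t) t) :
    Filter.Tendsto a Filter.atTop (nhds A') :=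
  lan_asymptotic_tracking_general fτ fφ a τmin A' hτmin hτ hlim hderiv
end
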